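/- arXiv:2209.02650 — 4 statements merged into one kernel-verified Lean document; each statement's English description precedes it below -/
import Mathlib

section
/- Let v be an assignment of the encoding variables that satisfies Φ_DFA and Φ_P, and let A' be the DFA decoded from v. Then for every prefix u ∈ Pref(P) and every state q ∈ [n], if the run of A' on u ends in state q, then v(x_{u,q}) = 1. -/
theorem DFA.eval_invariant_of_prefix {α σ : Type*} (A : DFA α σ) (P : Set (List α))
    (X : List α → σ → Prop) (hnil : X [] A.start)
    (hsnoc : ∀ u a, (∃ w ∈ P, u ++ [a] <+: w) → ∀ p, X u p → X (u ++ [a]) (A.step p a)) :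
    ∀ u : List α, (∃ w ∈ P, u <+: w) → X u (A.eval u) := by
  intro u
  induction u using List.reverseRecOn with
  | nil => exact fun _ => A.eval_nil ▸ hnil
  | append_singleton u a ih =>
    rintro ⟨w, hw, huaw⟩
    rw [A.eval_append_singleton]
    exact hsnoc u a ⟨w, hw, huaw⟩ _ (ih ⟨w, hw, (u.prefix_append [a]).trans huaw⟩)

theorem claim_positives_general
    {α : Type}
    (n : ℕ) (hn : 1 ≤ n) (P : Set (List α))
    (d : Fin n → α → Fin n → Bool)
    (x : List α → Fin n → Bool)
    -- `v` satisfies `Φ_P`: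
    (hinit : x [] ⟨0, hn⟩ = true ∧ ∀ q, q ≠ ⟨0, hn⟩ → x [] q = false)
    (htrans : ∀ (u : List α) (a : α), (∃ w ∈ P, (u ++ [a]) <+: w) →
      ∀ p q, x u p = true → d p a q = true → x (u ++ [a]) q = true)
    -- `A'` is the DFA decoded from `v`:
    (A' : DFA α (Fin n))
    (hstart : A'.start = ⟨0, hn⟩)
    (hstep : ∀ p a q, d p a q = true ↔ A'.step p a = q) :
    ∀ u : List α, (∃ w ∈ P, u <+: w) →
      ∀ q, A'.eval u = q → x u q = true := by
  rintro u hu q rfl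
  refine A'.eval_invariant_of_prefix P (fun u q => x u q = true) ?_ ?_ u hu
  · exact hstart ▸ hinit.1
  · exact fun u a hua p hp => htrans u a hua p _ hp ((hstep _ _ _).mpr rfl)

/-- **Claim 1.** Let `v` be an assignment (given by the Boolean
functions `d`, `f`, `x`) satisfying `Φ_DFA` and `Φ_P`, and let `A'` be the DFA
decoded from `v` (state set `[n]` is modeled by `Fin n`, with initial state `1`
modeled by `⟨0, _⟩`). Then for every prefix `u ∈ Pref(P)` and every state `q`,
if the run of `A'` on `u` ends in state `q`, then `v(x_{u,q}) = 1`. -/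
theorem claim_positives
    {α : Type} [Fintype α] [Nonempty α]
    (n : ℕ) (hn : 1 ≤ n) (P : Set (List α)) (hP : P.Finite)
    (d : Fin n → α → Fin n → Bool) (f : Fin n → Bool)
    (x : List α → Fin n → Bool)
    -- `v` satisfies `Φ_DFA`:
    (hPhiDFA : ∀ p a, ∃! q, d p a q = true)
    -- `v` satisfies `Φ_P`:
    (hinit : x [] ⟨0, hn⟩ = true ∧ ∀ q, q ≠ ⟨0, hn⟩ → x [] q = false)
    (htrans : ∀ (u : List α) (a : α), (∃ w ∈ P, (u ++ [a]) <+: w) →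
      ∀ p q, x u p = true → d p a q = true → x (u ++ [a]) q = true)
    (hfinal : ∀ w ∈ P, ∀ q, x w q = true → f q = true)
    -- `A'` is the DFA decoded from `v`:
    (A' : DFA α (Fin n))
    (hstart : A'.start = ⟨0, hn⟩)
    (hstep : ∀ p a q, d p a q = true ↔ A'.step p a = q)
    (haccept : A'.accept = {q | f q = true}) :
    ∀ u : List α, (∃ w ∈ P, u <+: w) →
      ∀ q, A'.eval u = q → x u q = true :=
  claim_positives_general n hn P d x hinit htrans A' hstart hstep
end

section
/- Let A = ([n], Σ, δ, 1, F) be a DFA with state set [n] and initial state 1, and let v be an assignment of the encoding variables that satisfies Φ_DFA and Φ_{⊆A}, with A' the DFA decoded from v. Then for every word w ∈ Σ*, if the run of A on w ends in state q and the run of A' on w ends in state q', then v(y_{q,q'}) = 1. -/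
namespace DFA

variable {α σ σ' : Type*} (M : DFA α σ) (N : DFA α σ') (R : σ → σ' → Prop)

theorem evalFrom_rel (hR : ∀ s s' a, R s s' → R (M.step s a) (N.step s' a)) :
    ∀ (w : List α) (s : σ) (s' : σ'), R s s' → R (M.evalFrom s w) (N.evalFrom s' w)
  | [], _, _, h => h
  | a :: w, s, s', h => by
    rw [evalFrom_cons, evalFrom_cons]
    exact evalFrom_rel hR w _ _ (hR s s' a h)

theorem eval_rel (hstart : R M.start N.start)
    (hR : ∀ s s' a, R s s' → R (M.step s a) (N.step s' a)) (w : List α) :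
    R (M.eval w) (N.eval w) :=
  M.evalFrom_rel N R hR w _ _ hstart

end DFA

theorem claim_inclusion_general
    {α : Type}
    (n : ℕ) (hn : 1 ≤ n)
    (A : DFA α (Fin n)) (hAstart : A.start = ⟨0, hn⟩)
    (d : Fin n → α → Fin n → Bool)
    (y : Fin n → Fin n → Bool)
    -- `v` satisfies `Φ_{⊆A}`:
    (hyinit : y ⟨0, hn⟩ ⟨0, hn⟩ = true)
    (hytrans : ∀ (p p' q' : Fin n) (a : α),
      y p p' = true → d p' a q' = true → y (A.step p a) q' = true)
    -- `A'` is the DFA decoded from `v`: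
    (A' : DFA α (Fin n))
    (hstart : A'.start = ⟨0, hn⟩)
    (hstep : ∀ p a q, d p a q = true ↔ A'.step p a = q) :
    ∀ (w : List α) (q q' : Fin n),
      A.eval w = q → A'.eval w = q' → y q q' = true := by
  rintro w _ _ rfl rfl
  refine A.eval_rel A' (fun p p' => y p p' = true) ?_ ?_ w
  · simpa only [hAstart, hstart] using hyinit
  · exact fun p p' a hy => hytrans p p' _ a hy ((hstep _ _ _).mpr rfl)

/-- **Claim 2.** Let `A = ([n], Σ, δ, 1, F)` be a DFA (state set
`[n]` is modeled by `Fin n`, initial state `1` by `⟨0, _⟩`), and let `v` (given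
by the Boolean functions `d`, `f`, `y`) satisfy `Φ_DFA` and `Φ_{⊆A}`, with `A'`
the DFA decoded from `v`. Then for every word `w ∈ Σ*`, if the run of `A` on
`w` ends in state `q` and the run of `A'` on `w` ends in state `q'`, then
`v(y_{q,q'}) = 1`. -/
theorem claim_inclusion
    {α : Type} [Fintype α] [Nonempty α]
    (n : ℕ) (hn : 1 ≤ n)
    (A : DFA α (Fin n)) (hAstart : A.start = ⟨0, hn⟩)
    (d : Fin n → α → Fin n → Bool) (f : Fin n → Bool)
    (y : Fin n → Fin n → Bool)
    -- `v` satisfies `Φ_DFA`: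
    (hPhiDFA : ∀ p a, ∃! q, d p a q = true)
    -- `v` satisfies `Φ_{⊆A}`:
    (hyinit : y ⟨0, hn⟩ ⟨0, hn⟩ = true)
    (hytrans : ∀ (p p' q' : Fin n) (a : α),
      y p p' = true → d p' a q' = true → y (A.step p a) q' = true)
    (hyfinal : ∀ p, p ∉ A.accept → ∀ p', y p p' = true → f p' = false)
    -- `A'` is the DFA decoded from `v`:
    (A' : DFA α (Fin n))
    (hstart : A'.start = ⟨0, hn⟩)
    (hstep : ∀ p a q, d p a q = true ↔ A'.step p a = q)
    (haccept : A'.accept = {q | f q = true}) :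
    ∀ (w : List α) (q q' : Fin n),
      A.eval w = q → A'.eval w = q' → y q q' = true :=
  claim_inclusion_general n hn A hAstart d y hyinit hytrans A' hstart hstep
end

section
/- Let A = ([n], Σ, δ, 1, F) be a DFA with state set [n] and initial state 1, and let v be an assignment of the encoding variables that satisfies Φ_DFA and Φ_{⊉A}, with A' the DFA decoded from v. Then for all 0 ≤ i ≤ n² and q, q' ∈ [n], if v(z_{i,q,q'}) = 1 then there exists a word w ∈ Σ* of length exactly i such that the run of A on w ends in state q and the run of A' on w ends in state q'. -/
/-! The variables `z_i` describe a lockstep walk of `A` and `A'` from their common start: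
consecutive pairs are joined by one letter read by both automata. Collecting these letters
gives, by induction on `i`, a word of length `i` leading both automata to the `i`-th pair. -/

namespace DFA

variable {α σ τ : Type*} (A : DFA α σ) (B : DFA α τ)

theorem exists_word_of_lockstep {N : ℕ} (R : ℕ → σ → τ → Prop)
    (hstart : ∀ q q', R 0 q q' → q = A.start ∧ q' = B.start)
    (hexists : ∀ i < N, ∃ p p', R i p p')
    (hstep : ∀ i < N, ∀ p p' q q', R i p p' → R (i + 1) q q' →
      ∃ a, A.step p a = q ∧ B.step p' a = q') :
    ∀ i ≤ N, ∀ q q', R i q q' → ∃ w : List α, w.length = i ∧ A.eval w = q ∧ B.eval w = q' := by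
  intro i
  induction i with
  | zero =>
    intro _ q q' hR
    obtain ⟨rfl, rfl⟩ := hstart q q' hR
    exact ⟨[], rfl, A.eval_nil, B.eval_nil⟩
  | succ i ih =>
    intro hi q q' hR
    obtain ⟨p, p', hp⟩ := hexists i hi
    obtain ⟨w, rfl, hwA, hwB⟩ := ih (Nat.le_of_succ_le hi) p p' hp
    obtain ⟨a, haA, haB⟩ := hstep w.length hi p p' q q' hp hR
    refine ⟨w ++ [a], by simp, ?_, ?_⟩
    · rw [eval_append_singleton, hwA, haA]
    · rw [eval_append_singleton, hwB, haB]

end DFA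

theorem claim_proper_inclusion_general
    {α : Type}
    (n : ℕ) (hn : 1 ≤ n)
    (A : DFA α (Fin n)) (hAstart : A.start = ⟨0, hn⟩)
    (d : Fin n → α → Fin n → Bool)
    (z : ℕ → Fin n → Fin n → Bool)
    -- `v` satisfies `Φ_{⊉A}`:
    (hzinit : z 0 ⟨0, hn⟩ ⟨0, hn⟩ = true)
    (hzunique : ∀ i ≤ n ^ 2, ∃! qq : Fin n × Fin n, z i qq.1 qq.2 = true)
    (hztrans : ∀ i < n ^ 2, ∀ p p' q q',
      z i p p' = true → z (i + 1) q q' = true →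
        ∃ a : α, A.step p a = q ∧ d p' a q' = true)
    -- `A'` is the DFA decoded from `v`:
    (A' : DFA α (Fin n))
    (hstart : A'.start = ⟨0, hn⟩)
    (hstep : ∀ p a q, d p a q = true ↔ A'.step p a = q) :
    ∀ i ≤ n ^ 2, ∀ q q' : Fin n, z i q q' = true →
      ∃ w : List α, w.length = i ∧ A.eval w = q ∧ A'.eval w = q' := by
  refine A.exists_word_of_lockstep A' (fun i q q' => z i q q' = true) ?_ ?_ ?_
  · intro q q' hz
    have hpair := (hzunique 0 (Nat.zero_le _)).unique (y₁ := (q, q')) (y₂ := (⟨0, hn⟩, ⟨0, hn⟩)) hz hzinit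
    simp only [Prod.mk.injEq] at hpair
    exact ⟨hpair.1.trans hAstart.symm, hpair.2.trans hstart.symm⟩
  · intro i hi
    obtain ⟨⟨p, p'⟩, hz, -⟩ := hzunique i hi.le
    exact ⟨p, p', hz⟩
  · intro i hi p p' q q' hp hq
    obtain ⟨a, haA, had⟩ := hztrans i hi p p' q q' hp hq
    exact ⟨a, haA, (hstep p' a q').mp had⟩

/-- **Claim 3.** Let `A = ([n], Σ, δ, 1, F)` be a DFA (state set
`[n]` is modeled by `Fin n`, initial state `1` by `⟨0, _⟩`), and let `v` (given
by the Boolean functions `d`, `f`, `z`) satisfy `Φ_DFA` and `Φ_{⊉A}`, with `A'`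
the DFA decoded from `v`. Then for all `0 ≤ i ≤ n²` and states `q`, `q'`, if
`v(z_{i,q,q'}) = 1` then there exists a word `w ∈ Σ*` of length exactly `i`
such that the run of `A` on `w` ends in `q` and the run of `A'` on `w` ends in
`q'`. -/
theorem claim_proper_inclusion
    {α : Type} [Fintype α] [Nonempty α]
    (n : ℕ) (hn : 1 ≤ n)
    (A : DFA α (Fin n)) (hAstart : A.start = ⟨0, hn⟩)
    (d : Fin n → α → Fin n → Bool) (f : Fin n → Bool)
    (z : ℕ → Fin n → Fin n → Bool)
    -- `v` satisfies `Φ_DFA`: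
    (hPhiDFA : ∀ p a, ∃! q, d p a q = true)
    -- `v` satisfies `Φ_{⊉A}`:
    (hzinit : z 0 ⟨0, hn⟩ ⟨0, hn⟩ = true)
    (hzunique : ∀ i ≤ n ^ 2, ∃! qq : Fin n × Fin n, z i qq.1 qq.2 = true)
    (hztrans : ∀ i < n ^ 2, ∀ p p' q q',
      z i p p' = true → z (i + 1) q q' = true →
        ∃ a : α, A.step p a = q ∧ d p' a q' = true)
    (hzfinal : ∃ i ≤ n ^ 2, ∃ q ∈ A.accept, ∃ q',
      z i q q' = true ∧ f q' = false)
    -- `A'` is the DFA decoded from `v`: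
    (A' : DFA α (Fin n))
    (hstart : A'.start = ⟨0, hn⟩)
    (hstep : ∀ p a q, d p a q = true ↔ A'.step p a = q)
    (haccept : A'.accept = {q | f q = true}) :
    ∀ i ≤ n ^ 2, ∀ q q' : Fin n, z i q q' = true →
      ∃ w : List α, w.length = i ∧ A.eval w = q ∧ A'.eval w = q' :=
  claim_proper_inclusion_general n hn A hAstart d z hzinit hzunique hztrans A' hstart hstep
end

section
/- Let Σ be a finite nonempty alphabet, P ⊆ Σ* a finite set of words, n ≥ 1, and A = ([n], Σ, δ, 1, F) a DFA with state set [n] and initial state 1. Then the propositional formula Φ^A = Φ_DFA ∧ Φ_P ∧ Φ_{⊆A} ∧ Φ_{⊉A} is satisfiable if and only if there exists a DFA A' over Σ with at most n states such that P ⊆ L(A') and L(A') ⊊ L(A). -/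
/-!
A satisfying assignment is read as a DFA `A'` on the states `[n]` (the `d` and `f` variables)
together with three certificates. The `x` variables over-approximate the run of `A'` on the
prefixes of `P`, so each word of `P` ends in a final state of `A'`. The `y` variables contain
every pair of states reached by `A` and `A'` on a common word, so a word accepted by `A'` but
rejected by `A` would violate the last clause of `Φ_{⊆A}`. The `z` variables trace a run of the
product automaton `A × A'` reaching a state accepting for `A` and rejecting for `A'`.

Conversely, a DFA with at most `n` states embeds into `[n]` with initial state `1`, and the
variables are its transition table, its final states, its runs and the reachable pairs of the
product. The bound `n²` on the length of `z` comes from the fact that a nonempty language of a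
DFA contains a word shorter than its number of states, applied to the product automaton
recognising `L(A) \ L(A')`; this word is padded with an arbitrary letter to length `n²`.
-/

variable {α Q Q' σ τ : Type}

namespace DFA

theorem eval_take_add_one (M : DFA α σ) {w : List α} {i : ℕ} (h : i < w.length) :
    M.eval (w.take (i + 1)) = M.step (M.eval (w.take i)) w[i] := by
  rw [← List.take_append_getElem h, eval_append_singleton]

theorem eval_rel_s10 (A : DFA α Q) (M : DFA α Q') {R : Q → Q' → Prop} (h₀ : R A.start M.start)
    (hstep : ∀ p p' a, R p p' → R (A.step p a) (M.step p' a)) (w : List α) :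
    R (A.eval w) (M.eval w) := by
  induction w using List.reverseRecOn with
  | nil => exact h₀
  | append_singleton w a ih =>
    rw [eval_append_singleton, eval_append_singleton]
    exact hstep _ _ a ih

theorem exists_mem_accepts_length_lt_card [Fintype σ] (M : DFA α σ) {w : List α}
    (hw : w ∈ M.accepts) : ∃ v ∈ M.accepts, v.length < Fintype.card σ := by
  induction hk : w.length using Nat.strong_induction_on generalizing w with
  | _ k ih =>
  by_cases hlt : w.length < Fintype.card σ
  · exact ⟨w, hw, hlt⟩
  -- a run of length `≥ card σ` repeats a state; cutting out the loop shortens the word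
  obtain ⟨q, a, b, c, rfl, -, hb, ha, -, hc⟩ :=
    M.evalFrom_split (s := M.start) (not_lt.1 hlt) rfl
  refine ih (a ++ c).length ?_ (w := a ++ c) ?_ rfl
  · have := List.length_pos_iff.2 hb
    simp only [List.length_append] at hk ⊢
    omega
  · rw [mem_accepts, eval, evalFrom_of_append, ha, hc]
    exact hw

theorem exists_mem_accepts_not_mem_length_lt [Fintype Q] [Fintype Q'] (A : DFA α Q)
    (B : DFA α Q') (h : ¬A.accepts ≤ B.accepts) :
    ∃ w ∈ A.accepts, w ∉ B.accepts ∧ w.length < Fintype.card Q * Fintype.card Q' := by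
  obtain ⟨w, hwA, hwB⟩ := Set.not_subset.1 h
  have hw : w ∈ (A.inter Bᶜ).accepts := by
    rw [accepts_inter, accepts_compl, Language.mem_inf]
    exact ⟨hwA, hwB⟩
  obtain ⟨v, hv, hlen⟩ := (A.inter Bᶜ).exists_mem_accepts_length_lt_card hw
  rw [accepts_inter, accepts_compl, Language.mem_inf] at hv
  exact ⟨v, hv.1, hv.2, by rwa [Fintype.card_prod] at hlen⟩

def embed (M : DFA α σ) (e : σ → τ) (r : τ → σ) : DFA α τ where
  step p a := e (M.step (r p) a)
  start := e M.start
  accept := r ⁻¹' M.accept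

theorem evalFrom_embed (M : DFA α σ) {e : σ → τ} {r : τ → σ} (h : Function.LeftInverse r e)
    (s : σ) (w : List α) : (M.embed e r).evalFrom (e s) w = e (M.evalFrom s w) := by
  induction w generalizing s with
  | nil => rfl
  | cons a w ih =>
    rw [evalFrom_cons, evalFrom_cons, ← ih]
    simp only [embed, h s]

theorem accepts_embed (M : DFA α σ) {e : σ → τ} {r : τ → σ} (h : Function.LeftInverse r e) :
    (M.embed e r).accepts = M.accepts := by
  ext w
  change (M.embed e r).evalFrom (e M.start) w ∈ r ⁻¹' M.accept ↔ _
  rw [evalFrom_embed M h, Set.mem_preimage, h]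
  rfl

theorem exists_accepts_eq_start_eq [Fintype σ] [Fintype τ] (M : DFA α σ)
    (hcard : Fintype.card σ ≤ Fintype.card τ) (t : τ) :
    ∃ B : DFA α τ, B.start = t ∧ B.accepts = M.accepts := by
  classical
  obtain ⟨e₀⟩ := Function.Embedding.nonempty_of_card_le hcard
  let e := e₀.trans (Equiv.swap (e₀ M.start) t).toEmbedding
  have : Nonempty σ := ⟨M.start⟩
  refine ⟨M.embed e (Function.invFun e), Equiv.swap_apply_left _ _, ?_⟩
  exact M.accepts_embed (Function.leftInverse_invFun e.injective)

end DFA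

section Encoding

/- The four conjuncts of `Φ^A`, with `Q` the states of `A`, `Q'` those of the DFA to be found,
`q₀` the initial state `1` of the latter and `N` the bound `n²`. -/
variable (P : Set (List α)) (A : DFA α Q) (N : ℕ) (q₀ : Q') (d : Q' → α → Q' → Bool)
  (f : Q' → Bool)

def PhiDFA : Prop :=
  ∀ p a, ∃! q, d p a q = true

def PhiP (x : List α → Q' → Bool) : Prop :=
  (x [] q₀ = true ∧ ∀ q, q ≠ q₀ → x [] q = false) ∧
  (∀ (u : List α) (a : α), (∃ w ∈ P, (u ++ [a]) <+: w) →
    ∀ p q, x u p = true → d p a q = true → x (u ++ [a]) q = true) ∧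
  (∀ w ∈ P, ∀ q, x w q = true → f q = true)

def PhiSub (y : Q → Q' → Bool) : Prop :=
  (y A.start q₀ = true) ∧
  (∀ (p : Q) (p' q' : Q') (a : α),
    y p p' = true → d p' a q' = true → y (A.step p a) q' = true) ∧
  (∀ p, p ∉ A.accept → ∀ p', y p p' = true → f p' = false)

def PhiNotSup (z : ℕ → Q → Q' → Bool) : Prop :=
  (z 0 A.start q₀ = true) ∧
  (∀ i ≤ N, ∃! qq : Q × Q', z i qq.1 qq.2 = true) ∧
  (∀ i < N, ∀ p p' q q',
    z i p p' = true → z (i + 1) q q' = true →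
      ∃ a : α, A.step p a = q ∧ d p' a q' = true) ∧
  (∃ i ≤ N, ∃ q ∈ A.accept, ∃ q',
    z i q q' = true ∧ f q' = false)

end Encoding

section Soundness

variable {P : Set (List α)} {A : DFA α Q} {N : ℕ} {q₀ : Q'} {d : Q' → α → Q' → Bool}
  {f : Q' → Bool}

noncomputable def PhiDFA.decode (hd : PhiDFA d) (q₀ : Q') (f : Q' → Bool) : DFA α Q' where
  step p a := (hd p a).exists.choose
  start := q₀
  accept := {q | f q = true}

theorem PhiDFA.decode_step_eq_iff (hd : PhiDFA d) {p : Q'} {a : α} {q : Q'} :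
    (hd.decode q₀ f).step p a = q ↔ d p a q = true :=
  ⟨fun h => h ▸ (hd p a).exists.choose_spec,
    fun h => (hd p a).unique (hd p a).exists.choose_spec h⟩

theorem PhiP.subset_accepts (hd : PhiDFA d) {x : List α → Q' → Bool}
    (hP : PhiP P q₀ d f x) : P ⊆ (hd.decode q₀ f).accepts := by
  obtain ⟨⟨hx₀, -⟩, hstep, hfin⟩ := hP
  have hrun : ∀ u, (∃ w ∈ P, u <+: w) → x u ((hd.decode q₀ f).eval u) = true := by
    intro u
    induction u using List.reverseRecOn with
    | nil => exact fun _ => hx₀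
    | append_singleton u a ih =>
      intro hu
      rw [DFA.eval_append_singleton]
      refine hstep u a hu _ _ (ih ?_) (hd.decode_step_eq_iff.1 rfl)
      obtain ⟨w, hw, hpre⟩ := hu
      exact ⟨w, hw, (List.prefix_append u [a]).trans hpre⟩
  exact fun w hw => hfin w hw _ (hrun w ⟨w, hw, List.prefix_refl w⟩)

theorem PhiSub.accepts_le (hd : PhiDFA d) {y : Q → Q' → Bool} (hS : PhiSub A q₀ d f y) :
    (hd.decode q₀ f).accepts ≤ A.accepts := by
  obtain ⟨hy₀, hstep, hfin⟩ := hS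
  have hy := A.eval_rel_s10 (hd.decode q₀ f) (R := fun p p' => y p p' = true) hy₀
    fun p p' a h => hstep p p' _ a h (hd.decode_step_eq_iff.1 rfl)
  intro w hw
  by_contra hwA
  have : f ((hd.decode q₀ f).eval w) = true := hw
  rw [hfin _ hwA _ (hy w)] at this
  exact Bool.false_ne_true this

theorem PhiNotSup.exists_eval_eq (hd : PhiDFA d) {z : ℕ → Q → Q' → Bool}
    (hN : PhiNotSup A N q₀ d f z) :
    ∀ i ≤ N, ∀ q q', z i q q' = true →
      ∃ w, A.eval w = q ∧ (hd.decode q₀ f).eval w = q' := by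
  obtain ⟨hz₀, hzu, hstep, -⟩ := hN
  intro i
  induction i with
  | zero =>
    intro hi q q' hz
    obtain ⟨hq, hq'⟩ :=
      Prod.ext_iff.1 ((hzu 0 hi).unique (y₁ := (q, q')) (y₂ := (A.start, q₀)) hz hz₀)
    exact ⟨[], hq.symm, hq'.symm⟩
  | succ i ih =>
    intro hi q q' hz
    obtain ⟨⟨p, p'⟩, hzp, -⟩ := hzu i (by omega)
    obtain ⟨a, rfl, hda⟩ := hstep i hi p p' q q' hzp hz
    obtain ⟨w, rfl, rfl⟩ := ih (by omega) p p' hzp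
    exact ⟨w ++ [a], DFA.eval_append_singleton .., by
      rw [DFA.eval_append_singleton, hd.decode_step_eq_iff.2 hda]⟩

theorem PhiNotSup.not_accepts_le (hd : PhiDFA d) {z : ℕ → Q → Q' → Bool}
    (hN : PhiNotSup A N q₀ d f z) : ¬A.accepts ≤ (hd.decode q₀ f).accepts := by
  obtain ⟨i, hi, q, hq, q', hz, hfq'⟩ := hN.2.2.2
  obtain ⟨w, hwA, hwM⟩ := hN.exists_eval_eq hd i hi q q' hz
  intro hle
  have : f ((hd.decode q₀ f).eval w) = true := hle (show A.eval w ∈ A.accept from hwA ▸ hq)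
  rw [hwM, hfq'] at this
  exact Bool.false_ne_true this

end Soundness

section Completeness

open Classical in
noncomputable def DFA.stepVars (B : DFA α Q') : Q' → α → Q' → Bool :=
  fun p a q => decide (B.step p a = q)

open Classical in
noncomputable def DFA.acceptVars (B : DFA α Q') : Q' → Bool :=
  fun q => decide (q ∈ B.accept)

variable (P : Set (List α)) (A : DFA α Q) (B : DFA α Q')

theorem phiDFA_stepVars : PhiDFA B.stepVars :=
  fun p a => ⟨B.step p a, by simp [DFA.stepVars], by simp [DFA.stepVars]⟩

theorem exists_phiP (hP : P ⊆ B.accepts) : ∃ x, PhiP P B.start B.stepVars B.acceptVars x := by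
  classical
  refine ⟨fun u q => decide (B.eval u = q), ⟨?_, ?_⟩, ?_, ?_⟩
  · simp
  · intro q hq
    simpa [eq_comm] using hq
  · intro u a _ p q hp hq
    simp_all [DFA.stepVars]
  · intro w hw q hq
    simpa [DFA.acceptVars, ← of_decide_eq_true hq] using (B.mem_accepts.1 (hP hw))

theorem exists_phiSub (h : B.accepts ≤ A.accepts) :
    ∃ y, PhiSub A B.start B.stepVars B.acceptVars y := by
  classical
  refine ⟨fun p p' => decide (∃ w, A.eval w = p ∧ B.eval w = p'), ?_, ?_, ?_⟩
  · simpa using ⟨[], rfl, rfl⟩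
  · simp only [DFA.stepVars, decide_eq_true_eq]
    rintro p p' q' a ⟨w, rfl, rfl⟩ rfl
    exact ⟨w ++ [a], DFA.eval_append_singleton .., DFA.eval_append_singleton ..⟩
  · simp only [DFA.acceptVars, decide_eq_true_eq, decide_eq_false_iff_not]
    rintro p hp p' ⟨w, rfl, rfl⟩ hw
    exact hp (h hw)

theorem exists_phiNotSup [Nonempty α] {N : ℕ} {w : List α} (hwA : w ∈ A.accepts)
    (hwB : w ∉ B.accepts) (hN : w.length ≤ N) :
    ∃ z, PhiNotSup A N B.start B.stepVars B.acceptVars z := by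
  classical
  -- pad `w` so that the run has a letter to read at each of the `N` steps
  set W := w ++ List.replicate N (Classical.arbitrary α)
  have hW : N ≤ W.length := by simp [W]
  refine ⟨fun i q q' => decide (A.eval (W.take i) = q ∧ B.eval (W.take i) = q'), ?_, ?_, ?_, ?_⟩
  · simp
  · intro i _
    refine ⟨(A.eval (W.take i), B.eval (W.take i)), by simp, ?_⟩
    rintro ⟨q, q'⟩ h
    simp only [decide_eq_true_eq] at h
    exact Prod.ext h.1.symm h.2.symm
  · simp only [DFA.stepVars, decide_eq_true_eq]
    rintro i hi p p' q q' ⟨rfl, rfl⟩ ⟨rfl, rfl⟩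
    exact ⟨W[i], (A.eval_take_add_one (by omega)).symm, (B.eval_take_add_one (by omega)).symm⟩
  · refine ⟨w.length, hN, A.eval w, hwA, B.eval w, ?_, ?_⟩
    · simp [W]
    · simpa [DFA.acceptVars, DFA.mem_accepts] using hwB

end Completeness

theorem phiA_satisfiable_iff_general
    {α : Type} [Nonempty α]
    (n : ℕ) (hn : 1 ≤ n) (P : Set (List α))
    (A : DFA α (Fin n)) (hAstart : A.start = ⟨0, hn⟩) :
    (∃ (d : Fin n → α → Fin n → Bool) (f : Fin n → Bool)
        (x : List α → Fin n → Bool) (y : Fin n → Fin n → Bool)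
        (z : ℕ → Fin n → Fin n → Bool),
      -- `Φ_DFA`:
      (∀ p a, ∃! q, d p a q = true) ∧
      -- `Φ_P`:
      (x [] ⟨0, hn⟩ = true ∧ ∀ q, q ≠ ⟨0, hn⟩ → x [] q = false) ∧
      (∀ (u : List α) (a : α), (∃ w ∈ P, (u ++ [a]) <+: w) →
        ∀ p q, x u p = true → d p a q = true → x (u ++ [a]) q = true) ∧
      (∀ w ∈ P, ∀ q, x w q = true → f q = true) ∧
      -- `Φ_{⊆A}`:
      (y ⟨0, hn⟩ ⟨0, hn⟩ = true) ∧
      (∀ (p p' q' : Fin n) (a : α),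
        y p p' = true → d p' a q' = true → y (A.step p a) q' = true) ∧
      (∀ p, p ∉ A.accept → ∀ p', y p p' = true → f p' = false) ∧
      -- `Φ_{⊉A}`:
      (z 0 ⟨0, hn⟩ ⟨0, hn⟩ = true) ∧
      (∀ i ≤ n ^ 2, ∃! qq : Fin n × Fin n, z i qq.1 qq.2 = true) ∧
      (∀ i < n ^ 2, ∀ p p' q q',
        z i p p' = true → z (i + 1) q q' = true →
          ∃ a : α, A.step p a = q ∧ d p' a q' = true) ∧
      (∃ i ≤ n ^ 2, ∃ q ∈ A.accept, ∃ q',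
        z i q q' = true ∧ f q' = false))
    ↔
    (∃ (σ : Type) (_ : Fintype σ) (A' : DFA α σ),
      Fintype.card σ ≤ n ∧ P ⊆ A'.accepts ∧ A'.accepts < A.accepts) := by
  rw [← hAstart]
  constructor
  · rintro ⟨d, f, x, y, z, hd, hP₁, hP₂, hP₃, hS₁, hS₂, hS₃, hN₁, hN₂, hN₃, hN₄⟩
    refine ⟨Fin n, inferInstance, PhiDFA.decode hd A.start f, by simp,
      PhiP.subset_accepts hd ⟨hP₁, hP₂, hP₃⟩, ?_⟩
    exact lt_of_le_not_ge (PhiSub.accepts_le hd ⟨hS₁, hS₂, hS₃⟩)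
      (PhiNotSup.not_accepts_le hd ⟨hN₁, hN₂, hN₃, hN₄⟩)
  · rintro ⟨σ, _, A', hcard, hPA', hlt⟩
    obtain ⟨B, hBstart, hB⟩ := A'.exists_accepts_eq_start_eq (by simpa using hcard) A.start
    rw [← hB] at hPA' hlt
    obtain ⟨w, hwA, hwB, hlen⟩ := A.exists_mem_accepts_not_mem_length_lt B hlt.not_ge
    obtain ⟨x, hP₁, hP₂, hP₃⟩ := exists_phiP P B hPA'
    obtain ⟨y, hS₁, hS₂, hS₃⟩ := exists_phiSub A B hlt.le
    obtain ⟨z, hN₁, hN₂, hN₃, hN₄⟩ :=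
      exists_phiNotSup A B hwA hwB (N := n ^ 2) (by simpa [sq] using hlen.le)
    rw [hBstart] at hP₁ hS₁ hN₁
    exact ⟨_, _, x, y, z, phiDFA_stepVars B, hP₁, hP₂, hP₃, hS₁, hS₂, hS₃, hN₁, hN₂, hN₃, hN₄⟩

/-- **Theorem 2.** Let `Σ` be a finite nonempty alphabet,
`P ⊆ Σ*` a finite set of words, `n ≥ 1`, and `A = ([n], Σ, δ, 1, F)` a DFA
(state set `[n]` is modeled by `Fin n`, initial state `1` by `⟨0, _⟩`). Then
the propositional formula `Φ^A = Φ_DFA ∧ Φ_P ∧ Φ_{⊆A} ∧ Φ_{⊉A}` is satisfiable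
(i.e. there is an assignment, given by Boolean functions `d`, `f`, `x`, `y`,
`z`, satisfying all four conjuncts) if and only if there exists a DFA `A'` over
`Σ` with at most `n` states such that `P ⊆ L(A')` and `L(A') ⊊ L(A)`. -/
theorem phiA_satisfiable_iff
    {α : Type} [Fintype α] [Nonempty α]
    (n : ℕ) (hn : 1 ≤ n) (P : Set (List α)) (hP : P.Finite)
    (A : DFA α (Fin n)) (hAstart : A.start = ⟨0, hn⟩) :
    (∃ (d : Fin n → α → Fin n → Bool) (f : Fin n → Bool)
        (x : List α → Fin n → Bool) (y : Fin n → Fin n → Bool)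
        (z : ℕ → Fin n → Fin n → Bool),
      -- `Φ_DFA`:
      (∀ p a, ∃! q, d p a q = true) ∧
      -- `Φ_P`:
      (x [] ⟨0, hn⟩ = true ∧ ∀ q, q ≠ ⟨0, hn⟩ → x [] q = false) ∧
      (∀ (u : List α) (a : α), (∃ w ∈ P, (u ++ [a]) <+: w) →
        ∀ p q, x u p = true → d p a q = true → x (u ++ [a]) q = true) ∧
      (∀ w ∈ P, ∀ q, x w q = true → f q = true) ∧
      -- `Φ_{⊆A}`:
      (y ⟨0, hn⟩ ⟨0, hn⟩ = true) ∧
      (∀ (p p' q' : Fin n) (a : α),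
        y p p' = true → d p' a q' = true → y (A.step p a) q' = true) ∧
      (∀ p, p ∉ A.accept → ∀ p', y p p' = true → f p' = false) ∧
      -- `Φ_{⊉A}`:
      (z 0 ⟨0, hn⟩ ⟨0, hn⟩ = true) ∧
      (∀ i ≤ n ^ 2, ∃! qq : Fin n × Fin n, z i qq.1 qq.2 = true) ∧
      (∀ i < n ^ 2, ∀ p p' q q',
        z i p p' = true → z (i + 1) q q' = true →
          ∃ a : α, A.step p a = q ∧ d p' a q' = true) ∧
      (∃ i ≤ n ^ 2, ∃ q ∈ A.accept, ∃ q',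
        z i q q' = true ∧ f q' = false))
    ↔
    (∃ (σ : Type) (_ : Fintype σ) (A' : DFA α σ),
      Fintype.card σ ≤ n ∧ P ⊆ A'.accepts ∧ A'.accepts < A.accepts) :=
  phiA_satisfiable_iff_general n hn P A hAstart
end
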